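/- Let β̂_0 minimize F_0(β) = (1/2)||β - η||_2^2 + λ ∑_{ℓ∈I*} w_ℓ ||D_{a_ℓ} β_{A_ℓ}||_2, where the groups {A_ℓ}_{ℓ∈I*} are all either contained in A_0 or disjoint from A_0 (A_0 is not strictly contained in any A_ℓ). Then the minimizer of F(β) = F_0(β) + λ w_0 ||D_{a_0} β_{A_0}||_2 equals the minimizer of (1/2)||β - β̂_0||_2^2 + λ w_0 ||D_{a_0} β_{A_0}||_2. -/

import Mathlib

open Matrix BigOperators

noncomputable def l2 {n : Type*} [Fintype n] (v : n → ℝ) : ℝ := Real.sqrt (∑ i, v i ^ 2)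

section auxl2
variable {n : Type*} [Fintype n]

lemma l2_nonneg (v : n → ℝ) : 0 ≤ l2 v := Real.sqrt_nonneg _

lemma l2_sq (v : n → ℝ) : l2 v ^ 2 = ∑ i, v i ^ 2 :=
  Real.sq_sqrt (Finset.sum_nonneg fun _ _ => sq_nonneg _)

lemma l2_smul (t : ℝ) (v : n → ℝ) : l2 (t • v) = |t| * l2 v := by
  unfold l2
  rw [← Real.sqrt_sq_eq_abs, ← Real.sqrt_mul (sq_nonneg t), Finset.mul_sum]
  congr 1
  apply Finset.sum_congr rfl
  intros; simp [mul_pow]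

lemma ip_le (f g : n → ℝ) : (∑ i, f i * g i) ≤ l2 f * l2 g := by
  have h := Finset.sum_mul_sq_le_sq_mul_sq Finset.univ f g
  have h2 : |∑ i, f i * g i| ≤ l2 f * l2 g := by
    rw [← Real.sqrt_sq_eq_abs]
    unfold l2
    rw [← Real.sqrt_mul (Finset.sum_nonneg fun _ _ => sq_nonneg _)]
    exact Real.sqrt_le_sqrt h
  exact (le_abs_self _).trans h2

lemma l2_add_le (f g : n → ℝ) : l2 (f + g) ≤ l2 f + l2 g := by
  have key : ∑ i, (f + g) i ^ 2 ≤ (l2 f + l2 g) ^ 2 := by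
    have h1 := ip_le f g
    have h2 : ∑ i, (f + g) i ^ 2 = (∑ i, f i ^ 2) + 2 * (∑ i, f i * g i) + ∑ i, g i ^ 2 := by
      rw [Finset.mul_sum, ← Finset.sum_add_distrib, ← Finset.sum_add_distrib]
      apply Finset.sum_congr rfl; intros; simp; ring
    rw [h2, ← l2_sq f, ← l2_sq g]
    nlinarith [l2_nonneg f, l2_nonneg g]
  calc l2 (f + g) = Real.sqrt (∑ i, (f + g) i ^ 2) := rfl
    _ ≤ Real.sqrt ((l2 f + l2 g) ^ 2) := Real.sqrt_le_sqrt key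
    _ = l2 f + l2 g := by
        rw [Real.sqrt_sq (add_nonneg (l2_nonneg f) (l2_nonneg g))]

lemma l2_combo (t : ℝ) (h0 : 0 ≤ t) (h1 : t ≤ 1) (u v : n → ℝ) :
    l2 ((1 - t) • u + t • v) ≤ (1 - t) * l2 u + t * l2 v := by
  refine (l2_add_le _ _).trans ?_
  rw [l2_smul, l2_smul, abs_of_nonneg (by linarith), abs_of_nonneg h0]

lemma sum_sq_expand (x d : n → ℝ) (t : ℝ) :
    ∑ i, (x i + t * d i) ^ 2
      = (∑ i, x i ^ 2) + 2 * t * (∑ i, d i * x i) + t ^ 2 * (∑ i, d i ^ 2) := by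
  rw [Finset.mul_sum, Finset.mul_sum, ← Finset.sum_add_distrib, ← Finset.sum_add_distrib]
  apply Finset.sum_congr rfl; intros; ring

lemma small_t (X C : ℝ) (hC : 0 ≤ C) (h : ∀ t : ℝ, 0 < t → t ≤ 1 → X ≤ t * C) : X ≤ 0 := by
  by_contra hX
  push_neg at hX
  set D := 2 * (C + 1) with hDdef
  have hD : 0 < D := by positivity
  have hs : 0 < X / D := by positivity
  have h2 := h _ (lt_min one_pos hs) (min_le_left _ _)
  have h3 : min 1 (X / D) * C ≤ (X / D) * C :=
    mul_le_mul_of_nonneg_right (min_le_right _ _) hC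
  have h4 : X ≤ (X / D) * C := h2.trans h3
  rw [div_mul_eq_mul_div, le_div_iff₀ hD] at h4
  nlinarith

lemma eq_of_sum_sq_le_zero (f g : n → ℝ) (h : ∑ i, (f i - g i) ^ 2 ≤ 0) : f = g := by
  have h0 : ∑ i, (f i - g i) ^ 2 = 0 :=
    le_antisymm h (Finset.sum_nonneg fun _ _ => sq_nonneg _)
  funext i
  have := (Finset.sum_eq_zero_iff_of_nonneg (fun _ _ => sq_nonneg _)).mp h0 i (Finset.mem_univ i)
  have := pow_eq_zero_iff (n := 2) (by norm_num) |>.mp this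
  linarith [sub_eq_zero.mp this]
end auxl2
noncomputable def Dmat (n : Type*) [Fintype n] [DecidableEq n] : Matrix n n ℝ :=
  1 - ((Fintype.card n : ℝ))⁻¹ • Matrix.of (fun _ _ => (1 : ℝ))

lemma Dmat_mulVec {n : Type*} [Fintype n] [DecidableEq n] (v : n → ℝ) (i : n) :
    (Dmat n).mulVec v i = v i - (Fintype.card n : ℝ)⁻¹ * ∑ j, v j := by
  have hcard : (0 : ℕ) < Fintype.card n := Fintype.card_pos_iff.mpr ⟨i⟩
  simp [Dmat, Matrix.mulVec, dotProduct, Matrix.sub_apply, Matrix.one_apply,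
    sub_mul, Finset.sum_sub_distrib, ite_mul, Finset.mul_sum]

lemma Dmat_mulVec_const {n : Type*} [Fintype n] [DecidableEq n] (k : ℝ) :
    (Dmat n).mulVec (fun _ => k) = 0 := by
  funext i
  have hcard : (0 : ℕ) < Fintype.card n := Fintype.card_pos_iff.mpr ⟨i⟩
  rw [Dmat_mulVec]
  simp only [Finset.sum_const, Finset.card_univ, nsmul_eq_mul, Pi.zero_apply]
  field_simp
  ring

lemma strong_min {n : Type*} [Fintype n] (h : (n → ℝ) → ℝ) (c m : n → ℝ)
    (hconv : ∀ β : n → ℝ, ∀ t : ℝ, 0 ≤ t → t ≤ 1 →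
      h (m + t • (β - m)) ≤ (1 - t) * h m + t * h β)
    (hmin : ∀ β, (1/2) * (∑ i, (m i - c i)^2) + h m ≤ (1/2) * (∑ i, (β i - c i)^2) + h β)
    (β : n → ℝ) :
    (1/2) * (∑ i, (m i - c i)^2) + h m + (1/2) * (∑ i, (β i - m i)^2)
      ≤ (1/2) * (∑ i, (β i - c i)^2) + h β := by
  set Q := ∑ i, (β i - m i) ^ 2 with hQdef
  have hQ0 : 0 ≤ Q := Finset.sum_nonneg fun _ _ => sq_nonneg _
  set ipd := ∑ i, (β i - m i) * (m i - c i) with hipdef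
  have key : 0 ≤ ipd + (h β - h m) := by
    have hle : -(ipd + (h β - h m)) ≤ 0 := by
      apply small_t _ (Q / 2) (by linarith)
      intro t ht0 ht1
      have h1 := hmin (m + t • (β - m))
      have h2 := hconv β t ht0.le ht1
      have h3 : ∑ i, ((m + t • (β - m)) i - c i) ^ 2
          = (∑ i, (m i - c i) ^ 2) + 2 * t * ipd + t ^ 2 * Q := by
        rw [hipdef, hQdef, ← sum_sq_expand (fun i => m i - c i) (fun i => β i - m i) t]
        apply Finset.sum_congr rfl; intros; simp; ring
      rw [h3] at h1
      have h4 : 0 ≤ t * ipd + t^2 * Q / 2 + t * (h β - h m) := by nlinarith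
      have h5 : 0 ≤ ipd + t * Q / 2 + (h β - h m) := by
        have := (mul_le_mul_iff_right₀ ht0).mp (by nlinarith : t * 0 ≤ t * (ipd + t * Q / 2 + (h β - h m)))
        linarith
      linarith
    linarith
  have hexp : ∑ i, (β i - c i) ^ 2 = (∑ i, (m i - c i) ^ 2) + 2 * ipd + Q := by
    rw [hipdef, hQdef]
    have := sum_sq_expand (fun i => m i - c i) (fun i => β i - m i) 1
    simp only [one_mul, one_pow, mul_one] at this
    rw [← this]
    apply Finset.sum_congr rfl; intros; ring_nf
  rw [hexp]; linarith



noncomputable def Omega {p : ℕ} {ι : Type*} [Fintype ι] (A : ι → Finset (Fin p))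
    (w : ι → ℝ) (β : Fin p → ℝ) : ℝ :=
  ∑ ℓ, w ℓ * l2 ((Dmat {x // x ∈ A ℓ}).mulVec (fun i => β i.1))

noncomputable def Dv {p : ℕ} (B : Finset (Fin p)) (β : Fin p → ℝ) : {x // x ∈ B} → ℝ :=
  (Dmat {x // x ∈ B}).mulVec (fun i => β i.1)

lemma Dv_apply {p : ℕ} (B : Finset (Fin p)) (β : Fin p → ℝ) (i : {x // x ∈ B}) :
    Dv B β i = β i.1 - (B.card : ℝ)⁻¹ * ∑ j ∈ B, β j := by
  simp only [Dv]
  rw [Dmat_mulVec, Fintype.card_coe, Finset.sum_coe_sort]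

lemma Dv_sub_smul {p : ℕ} (B : Finset (Fin p)) (x y : Fin p → ℝ) (t : ℝ) :
    Dv B (x - t • y) = Dv B x - t • Dv B y := by
  simp only [Dv]
  have h : (fun i : {z // z ∈ B} => (x - t • y) i.1)
      = (fun i : {z // z ∈ B} => x i.1) - t • (fun i : {z // z ∈ B} => y i.1) := rfl
  rw [h, Matrix.mulVec_sub, Matrix.mulVec_smul]

lemma Dv_add_smul {p : ℕ} (B : Finset (Fin p)) (x y : Fin p → ℝ) (t : ℝ) :
    Dv B (x + t • y) = Dv B x + t • Dv B y := by
  simp only [Dv]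
  have h : (fun i : {z // z ∈ B} => (x + t • y) i.1)
      = (fun i : {z // z ∈ B} => x i.1) + t • (fun i : {z // z ∈ B} => y i.1) := rfl
  rw [h, Matrix.mulVec_add, Matrix.mulVec_smul]

set_option maxHeartbeats 2000000 in
/-- Closed-form update: adding a top-level group penalty to an already-solved prox
problem amounts to a prox step started from the previous solution. -/
theorem stmt16 {p : ℕ} {ι : Type*} [Fintype ι] (lam : ℝ) (hlam : 0 < lam)
    (A : ι → Finset (Fin p)) (w : ι → ℝ) (hw : ∀ ℓ, 0 ≤ w ℓ)
    (A0 : Finset (Fin p)) (hA0 : A0.Nonempty) (w0 : ℝ) (hw0 : 0 ≤ w0)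
    (hhier : ∀ ℓ, A ℓ ⊆ A0 ∨ Disjoint (A ℓ) A0)
    (η βh0 βh : Fin p → ℝ) :
    let F0 : (Fin p → ℝ) → ℝ := fun β => (1 / 2) * l2 (β - η) ^ 2 + lam * Omega A w β
    let pen0 : (Fin p → ℝ) → ℝ :=
      fun β => lam * w0 * l2 ((Dmat {x // x ∈ A0}).mulVec (fun i => β i.1))
    let F : (Fin p → ℝ) → ℝ := fun β => F0 β + pen0 β
    let G : (Fin p → ℝ) → ℝ := fun β => (1 / 2) * l2 (β - βh0) ^ 2 + pen0 β
    (∀ β, F0 βh0 ≤ F0 β) → (∀ β, F βh ≤ F β) →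
      (∀ β, G βh ≤ G β) ∧ (∀ γ : Fin p → ℝ, (∀ β, G γ ≤ G β) → γ = βh) := by
  intro F0 pen0 F G hmin0 hminF
  classical
  have hF0 : ∀ β, F0 β = (1 / 2) * l2 (β - η) ^ 2 + lam * Omega A w β := fun _ => rfl
  have hpen : ∀ β, pen0 β = (lam * w0) * l2 (Dv A0 β) := fun _ => rfl
  have hF : ∀ β, F β = F0 β + pen0 β := fun _ => rfl
  have hGdef : ∀ β, G β = (1 / 2) * l2 (β - βh0) ^ 2 + pen0 β := fun _ => rfl
  have hOm : ∀ β, Omega A w β = ∑ ℓ, w ℓ * l2 (Dv (A ℓ) β) := fun _ => rfl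
  -- basic quantities
  have hcard0 : (0 : ℝ) < (A0.card : ℝ) := by
    exact_mod_cast Finset.card_pos.mpr hA0
  set cA : ℝ := (A0.card : ℝ)⁻¹ * ∑ i ∈ A0, βh0 i with hcA
  set u : Fin p → ℝ := fun i => if i ∈ A0 then βh0 i - cA else 0 with hu
  have hu_mem : ∀ i, i ∈ A0 → u i = βh0 i - cA := fun i hi => by
    simp only [hu]; rw [if_pos hi]
  have hu_nmem : ∀ i, i ∉ A0 → u i = 0 := fun i hi => by
    simp only [hu]; rw [if_neg hi]
  have hsumu : ∑ i ∈ A0, u i = 0 := by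
    calc ∑ i ∈ A0, u i = ∑ i ∈ A0, (βh0 i - cA) :=
          Finset.sum_congr rfl (fun i hi => hu_mem i hi)
      _ = (∑ i ∈ A0, βh0 i) - (A0.card : ℝ) * cA := by
          rw [Finset.sum_sub_distrib, Finset.sum_const, nsmul_eq_mul]
      _ = 0 := by rw [hcA]; field_simp; ring
  -- sums over the subtype
  have hsumu' : ∑ i : {x // x ∈ A0}, u i.1 = 0 := by
    rw [Finset.sum_coe_sort]; exact hsumu
  set Q : ℝ := ∑ i, u i ^ 2 with hQdef
  have hQ0 : 0 ≤ Q := Finset.sum_nonneg fun _ _ => sq_nonneg _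
  have hQA0 : ∑ i : {x // x ∈ A0}, u i.1 ^ 2 = Q := by
    calc ∑ i : {x // x ∈ A0}, u i.1 ^ 2 = ∑ i ∈ A0, u i ^ 2 :=
          Finset.sum_coe_sort A0 (fun i => u i ^ 2)
      _ = ∑ i, u i ^ 2 := Finset.sum_subset (Finset.subset_univ A0)
          (fun x _ hx => by rw [hu_nmem x hx]; ring)
      _ = Q := hQdef.symm
  set K : ℝ := l2 u with hKdef
  have hK0 : 0 ≤ K := l2_nonneg u
  have hK2 : K ^ 2 = Q := l2_sq u
  have hKA0 : l2 (fun i : {x // x ∈ A0} => u i.1) = K := by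
    rw [hKdef]; unfold l2; rw [hQA0, hQdef]
  -- Dv identities
  have hDvb : Dv A0 βh0 = fun i : {x // x ∈ A0} => u i.1 := by
    funext i
    rw [Dv_apply, hu_mem i.1 i.2, hcA]
  have hDvu : Dv A0 u = fun i : {x // x ∈ A0} => u i.1 := by
    funext i
    rw [Dv_apply, hsumu, mul_zero, sub_zero]
  -- inner product identity
  have hipu : ∀ β : Fin p → ℝ,
      ∑ i : {x // x ∈ A0}, Dv A0 β i * u i.1 = ∑ i, β i * u i := by
    intro β
    calc ∑ i : {x // x ∈ A0}, Dv A0 β i * u i.1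
        = ∑ i : {x // x ∈ A0},
            (β i.1 * u i.1 - ((A0.card : ℝ)⁻¹ * ∑ j ∈ A0, β j) * u i.1) := by
          apply Finset.sum_congr rfl; intro i _; rw [Dv_apply]; ring
      _ = (∑ i : {x // x ∈ A0}, β i.1 * u i.1)
            - ((A0.card : ℝ)⁻¹ * ∑ j ∈ A0, β j) * ∑ i : {x // x ∈ A0}, u i.1 := by
          rw [Finset.sum_sub_distrib, ← Finset.mul_sum]
      _ = ∑ i : {x // x ∈ A0}, β i.1 * u i.1 := by rw [hsumu', mul_zero, sub_zero]
      _ = ∑ i ∈ A0, β i * u i := Finset.sum_coe_sort A0 (fun i => β i * u i)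
      _ = ∑ i, β i * u i :=
          Finset.sum_subset (Finset.subset_univ A0)
            (fun x _ hx => by rw [hu_nmem x hx, mul_zero])
  -- the linear decrease of Omega along the direction u
  set S : ℝ := ∑ ℓ, (if A ℓ ⊆ A0 then w ℓ * l2 (Dv (A ℓ) βh0) else 0) with hSdef
  have hS0 : 0 ≤ S := Finset.sum_nonneg fun ℓ _ => by
    split
    · exact mul_nonneg (hw ℓ) (l2_nonneg _)
    · exact le_refl 0
  have hOmegaScale : ∀ t : ℝ, t ≤ 1 →
      Omega A w (βh0 - t • u) = Omega A w βh0 - t * S := by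
    intro t ht
    rw [hOm, hOm, hSdef, Finset.mul_sum, ← Finset.sum_sub_distrib]
    apply Finset.sum_congr rfl
    intro ℓ _
    by_cases hsub : A ℓ ⊆ A0
    · have hresu : Dv (A ℓ) u = Dv (A ℓ) βh0 := by
        have h1 : (fun i : {x // x ∈ A ℓ} => u i.1)
            = (fun i : {x // x ∈ A ℓ} => βh0 i.1) - (fun _ => cA) := by
          funext i; exact hu_mem i.1 (hsub i.2)
        simp only [Dv]
        rw [h1, Matrix.mulVec_sub, Dmat_mulVec_const, sub_zero]
      have h2 : Dv (A ℓ) (βh0 - t • u) = (1 - t) • Dv (A ℓ) βh0 := by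
        rw [Dv_sub_smul, hresu]
        funext i; simp only [Pi.sub_apply, Pi.smul_apply, smul_eq_mul]; ring
      rw [h2, l2_smul, abs_of_nonneg (by linarith), if_pos hsub]
      ring
    · have hdisj : Disjoint (A ℓ) A0 := (hhier ℓ).resolve_left hsub
      have hresu : Dv (A ℓ) u = 0 := by
        have h1 : (fun i : {x // x ∈ A ℓ} => u i.1) = 0 := by
          funext i
          exact hu_nmem i.1 (Finset.disjoint_left.mp hdisj i.2)
        simp only [Dv]
        rw [h1, Matrix.mulVec_zero]
      have h2 : Dv (A ℓ) (βh0 - t • u) = Dv (A ℓ) βh0 := by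
        rw [Dv_sub_smul, hresu, smul_zero, sub_zero]
      rw [h2, if_neg hsub]
      ring
  -- expansion of F0 along the direction u
  set ipu : ℝ := ∑ i, u i * (βh0 i - η i) with hipudef
  have hF0sum : ∀ β, F0 β = (1/2) * (∑ i, (β i - η i) ^ 2) + lam * Omega A w β := by
    intro β
    rw [hF0, l2_sq]
    simp only [Pi.sub_apply]
  have hF0diff : ∀ t : ℝ, t ≤ 1 →
      F0 (βh0 - t • u) = F0 βh0 - t * (ipu + lam * S) + t ^ 2 * (Q / 2) := by
    intro t ht
    rw [hF0sum, hF0sum, hOmegaScale t ht]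
    have h1 : ∑ i, ((βh0 - t • u) i - η i) ^ 2
        = (∑ i, (βh0 i - η i) ^ 2) + 2 * (-t) * ipu + (-t) ^ 2 * Q := by
      rw [hipudef, hQdef, ← sum_sq_expand (fun i => βh0 i - η i) u (-t)]
      apply Finset.sum_congr rfl
      intro i _
      simp only [Pi.sub_apply, Pi.smul_apply, smul_eq_mul]
      ring
    rw [h1]
    ring
  -- stationarity: the derivative along u vanishes
  have hX : ipu + lam * S = 0 := by
    have hA : ipu + lam * S ≤ 0 := by
      apply small_t _ (Q / 2) (by linarith)
      intro t ht0 ht1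
      have h1 := hmin0 (βh0 - t • u)
      rw [hF0diff t ht1] at h1
      have h2 : t * (ipu + lam * S) ≤ t * (t * (Q / 2)) := by nlinarith
      exact le_of_mul_le_mul_left h2 ht0
    have hB : -(ipu + lam * S) ≤ 0 := by
      apply small_t _ (Q / 2) (by linarith)
      intro t ht0 ht1
      have h1 := hmin0 (βh0 - (-t) • u)
      rw [hF0diff (-t) (by linarith)] at h1
      have h2 : t * (-(ipu + lam * S)) ≤ t * (t * (Q / 2)) := by nlinarith
      exact le_of_mul_le_mul_left h2 ht0
    linarith
  -- the shrinkage factor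
  set κ : ℝ := lam * w0 with hκdef
  have hκ0 : 0 ≤ κ := mul_nonneg hlam.le hw0
  set θ : ℝ := if K ≤ κ then 1 else κ / K with hθdef
  have hKκ : ¬ K ≤ κ → 0 < K := fun h => lt_of_le_of_lt hκ0 (lt_of_not_ge h)
  have hθ0 : 0 ≤ θ := by
    rw [hθdef]; split
    · exact zero_le_one
    · rename_i h; exact div_nonneg hκ0 (hKκ h).le
  have hθ1 : θ ≤ 1 := by
    rw [hθdef]; split
    · exact le_refl 1
    · rename_i h; exact (div_le_one (hKκ h)).mpr (le_of_not_ge h)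
  have hθK : θ * K ≤ κ := by
    rw [hθdef]; split
    · rename_i h; rw [one_mul]; exact h
    · rename_i h; rw [div_mul_cancel₀ _ (hKκ h).ne']
  have hθKeq : (1 - θ) * (κ - θ * K) = 0 := by
    rw [hθdef]; split
    · ring
    · rename_i h; rw [div_mul_cancel₀ _ (hKκ h).ne']; ring
  set γ : Fin p → ℝ := βh0 - θ • u with hγdef
  -- the solution of the G-problem
  have hDvγ : Dv A0 γ = (1 - θ) • (fun i : {x // x ∈ A0} => u i.1) := by
    rw [hγdef, Dv_sub_smul, hDvb, hDvu]
    funext i; simp only [Pi.sub_apply, Pi.smul_apply, smul_eq_mul]; ring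
  have hl2Dvγ : l2 (Dv A0 γ) = (1 - θ) * K := by
    rw [hDvγ, l2_smul, hKA0, abs_of_nonneg (by linarith)]
  have hGsum : ∀ β, G β = (1/2) * (∑ i, (β i - βh0 i) ^ 2) + κ * l2 (Dv A0 β) := by
    intro β
    rw [hGdef, hpen, l2_sq, hκdef]
    simp only [Pi.sub_apply]
  have hquadγ : ∑ i, (γ i - βh0 i) ^ 2 = θ ^ 2 * Q := by
    rw [hQdef, Finset.mul_sum]
    apply Finset.sum_congr rfl
    intro i _
    rw [hγdef]
    simp only [Pi.sub_apply, Pi.smul_apply, smul_eq_mul]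
    ring
  have hGstrong : ∀ β, G γ + (1/2) * (∑ i, (β i - γ i) ^ 2) ≤ G β := by
    intro β
    rw [hGsum β, hGsum γ, hquadγ, hl2Dvγ]
    set L : ℝ := l2 (Dv A0 β) with hLdef
    have hL0 : 0 ≤ L := l2_nonneg _
    set P : ℝ := ∑ i : {x // x ∈ A0}, Dv A0 β i * u i.1 with hPdef
    have hCS : P ≤ L * K := by
      rw [hPdef, hLdef]
      have := ip_le (Dv A0 β) (fun i : {x // x ∈ A0} => u i.1)
      rw [hKA0] at this
      exact this
    have hquad : ∑ i, (β i - βh0 i) ^ 2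
        = (∑ i, (β i - γ i) ^ 2) + 2 * (-θ) * (∑ i, u i * (β i - γ i)) + θ ^ 2 * Q := by
      have h := sum_sq_expand (fun i => β i - γ i) u (-θ)
      have h2 : ∑ i, (β i - βh0 i) ^ 2 = ∑ i, ((β i - γ i) + (-θ) * u i) ^ 2 := by
        apply Finset.sum_congr rfl
        intro i _
        rw [hγdef]
        simp only [Pi.sub_apply, Pi.smul_apply, smul_eq_mul]
        ring
      rw [h2, h]; ring
    have hipγ : ∑ i, u i * (β i - γ i) = P - (1 - θ) * Q := by
      have h1 : ∑ i, β i * u i = P := (hipu β).symm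
      have h2 : ∑ i, γ i * u i = (1 - θ) * Q := by
        rw [← hipu γ, hDvγ]
        rw [← hQA0, Finset.mul_sum]
        apply Finset.sum_congr rfl
        intro i _
        simp only [Pi.smul_apply, smul_eq_mul]
        ring
      calc ∑ i, u i * (β i - γ i) = (∑ i, β i * u i) - ∑ i, γ i * u i := by
            rw [← Finset.sum_sub_distrib]
            apply Finset.sum_congr rfl; intro i _; ring
        _ = P - (1 - θ) * Q := by rw [h1, h2]
    rw [hquad, hipγ]
    have c1 : θ * P ≤ θ * (L * K) := mul_le_mul_of_nonneg_left hCS hθ0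
    have c2 : θ * (L * K) ≤ κ * L := by
      have h := mul_le_mul_of_nonneg_right hθK hL0
      nlinarith [h]
    have c3 : θ * P ≤ κ * L := c1.trans c2
    have e4 : κ * ((1 - θ) * K) = θ * (1 - θ) * Q := by
      linear_combination K * hθKeq + θ * (1 - θ) * hK2
    linarith [c3, e4]
  -- γ attains the same F0 gap
  have hF0γ : F0 γ = F0 βh0 + θ ^ 2 * (Q / 2) := by
    rw [hγdef]
    rw [hF0diff θ hθ1, hX]
    ring
  have hFγ : F γ = F0 βh0 + G γ := by
    rw [hF, hF0γ, hGsum, hquadγ, hpen]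
    ring
  -- strong optimality of γ for F
  have hstrong0 : ∀ β, F0 βh0 + (1/2) * (∑ i, (β i - βh0 i) ^ 2) ≤ F0 β := by
    intro β
    have hconv : ∀ β' : Fin p → ℝ, ∀ t : ℝ, 0 ≤ t → t ≤ 1 →
        lam * Omega A w (βh0 + t • (β' - βh0))
          ≤ (1 - t) * (lam * Omega A w βh0) + t * (lam * Omega A w β') := by
      intro β' t ht0 ht1
      have hterm : ∀ ℓ : ι, l2 (Dv (A ℓ) (βh0 + t • (β' - βh0)))
          ≤ (1 - t) * l2 (Dv (A ℓ) βh0) + t * l2 (Dv (A ℓ) β') := by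
        intro ℓ
        have h1 : Dv (A ℓ) (βh0 + t • (β' - βh0))
            = (1 - t) • Dv (A ℓ) βh0 + t • Dv (A ℓ) β' := by
          rw [Dv_add_smul]
          have h2 : Dv (A ℓ) (β' - βh0) = Dv (A ℓ) β' - Dv (A ℓ) βh0 := by
            have := Dv_sub_smul (A ℓ) β' βh0 1
            simp only [one_smul] at this
            exact this
          rw [h2]
          funext i
          simp only [Pi.add_apply, Pi.sub_apply, Pi.smul_apply, smul_eq_mul]
          ring
        rw [h1]
        exact l2_combo t ht0 ht1 _ _
      rw [hOm, hOm, hOm, Finset.mul_sum, Finset.mul_sum, Finset.mul_sum,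
        Finset.mul_sum, Finset.mul_sum, ← Finset.sum_add_distrib]
      apply Finset.sum_le_sum
      intro ℓ _
      have h3 := mul_le_mul_of_nonneg_left (hterm ℓ) (mul_nonneg hlam.le (hw ℓ))
      linarith [h3]
    have hmin' : ∀ β', (1/2) * (∑ i, (βh0 i - η i)^2) + lam * Omega A w βh0
        ≤ (1/2) * (∑ i, (β' i - η i)^2) + lam * Omega A w β' := by
      intro β'
      have := hmin0 β'
      rw [hF0sum, hF0sum] at this
      exact this
    have := strong_min (fun β' => lam * Omega A w β') η βh0 hconv hmin' β
    rw [hF0sum β, hF0sum βh0]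
    linarith
  have hFG : ∀ β, F0 βh0 + G β ≤ F β := by
    intro β
    rw [hF, hGsum, hpen]
    have := hstrong0 β
    linarith
  have hFstrong : ∀ β, F γ + (1/2) * (∑ i, (β i - γ i) ^ 2) ≤ F β := by
    intro β
    calc F γ + (1/2) * (∑ i, (β i - γ i) ^ 2)
        = F0 βh0 + (G γ + (1/2) * (∑ i, (β i - γ i) ^ 2)) := by rw [hFγ]; ring
      _ ≤ F0 βh0 + G β := add_le_add_right (hGstrong β) _
      _ ≤ F β := hFG β
  have hγβh : βh = γ := by
    apply eq_of_sum_sq_le_zero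
    have h3 : F γ + (1/2) * (∑ i, (βh i - γ i) ^ 2) ≤ F γ :=
      (hFstrong βh).trans (hminF γ)
    have h4 : (1/2) * (∑ i, (βh i - γ i) ^ 2) ≤ 0 :=
      (add_le_iff_nonpos_right _).mp h3
    have h5 : (1/2) * (∑ i, (βh i - γ i) ^ 2) ≤ (1/2) * 0 := by rw [mul_zero]; exact h4
    exact le_of_mul_le_mul_left h5 (by norm_num)
  constructor
  · intro β
    have hnn : 0 ≤ (1/2) * (∑ i, (β i - γ i) ^ 2) :=
      mul_nonneg (by norm_num) (Finset.sum_nonneg fun _ _ => sq_nonneg _)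
    rw [hγβh]
    exact (le_add_of_nonneg_right hnn).trans (hGstrong β)
  · intro γ' hγ'
    have h3 : G γ + (1/2) * (∑ i, (γ' i - γ i) ^ 2) ≤ G γ :=
      (hGstrong γ').trans (hγ' γ)
    have h4 : (1/2) * (∑ i, (γ' i - γ i) ^ 2) ≤ (1/2) * 0 := by
      rw [mul_zero]; exact (add_le_iff_nonpos_right _).mp h3
    rw [hγβh]
    exact eq_of_sum_sq_le_zero γ' γ (le_of_mul_le_mul_left h4 (by norm_num))
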